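/- arXiv:2211.02387 — 3 statements merged into one kernel-verified Lean document; each statement's English description precedes it below -/
import Mathlib

section
/- Let K be a field of characteristic zero. For a free Lie algebra 𝔤 = L(V) on a vector space V of dimension at least 1, the universal enveloping algebra functor is not full: there exists an associative algebra homomorphism U𝔤 → U𝔤 that is not of the form U(f) for any Lie algebra homomorphism f : 𝔤 → 𝔤. -/
attribute [local instance 100] LieRing.ofAssociativeRing

/-- The algebra morphism `U(f)` induced by a Lie algebra morphism `f`. -/
noncomputable def UEnv.map {K 𝔤 𝔥 : Type*} [CommRing K]
    [LieRing 𝔤] [LieAlgebra K 𝔤] [LieRing 𝔥] [LieAlgebra K 𝔥] (f : 𝔤 →ₗ⁅K⁆ 𝔥) :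
    UniversalEnvelopingAlgebra K 𝔤 →ₐ[K] UniversalEnvelopingAlgebra K 𝔥 :=
  UniversalEnvelopingAlgebra.lift K ((UniversalEnvelopingAlgebra.ι K).comp f)

/-!
Every `U(f)` maps the generators `ι x` of `U𝔤` into `ι 𝔤`, which lies in the kernel of the
augmentation `ε : U𝔤 → K` (induced by the zero Lie map `𝔤 → K`). The algebra endomorphism of
`U(L(X))` sending every generator of `L(X)` to `1` violates this, since `ε 1 = 1`.
-/

namespace UniversalEnvelopingAlgebra

variable (R L : Type*) [CommRing R] [LieRing L] [LieAlgebra R L]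

noncomputable def augmentation : UniversalEnvelopingAlgebra R L →ₐ[R] R :=
  lift R 0

variable {R L}

@[simp]
theorem augmentation_ι (x : L) : augmentation R L (ι R x) = 0 := by
  simp [augmentation]

end UniversalEnvelopingAlgebra

open UniversalEnvelopingAlgebra

namespace UEnv

variable {K 𝔤 𝔥 : Type*} [CommRing K] [LieRing 𝔤] [LieAlgebra K 𝔤] [LieRing 𝔥] [LieAlgebra K 𝔥]

@[simp]
theorem map_ι (f : 𝔤 →ₗ⁅K⁆ 𝔥) (x : 𝔤) : map f (ι K x) = ι K (f x) :=
  lift_ι_apply K _ x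

theorem augmentation_map_ι (f : 𝔤 →ₗ⁅K⁆ 𝔥) (x : 𝔤) : augmentation K 𝔥 (map f (ι K x)) = 0 := by
  rw [map_ι, augmentation_ι]

theorem ne_map_of_augmentation_ne_zero {φ : UniversalEnvelopingAlgebra K 𝔤 →ₐ[K]
    UniversalEnvelopingAlgebra K 𝔥} {x : 𝔤} (hφ : augmentation K 𝔥 (φ (ι K x)) ≠ 0)
    (f : 𝔤 →ₗ⁅K⁆ 𝔥) : φ ≠ map f := by
  rintro rfl
  exact hφ (augmentation_map_ι f x)

end UEnv

theorem universalEnveloping_not_full_general (K X : Type*) [Field K] [Nonempty X] :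
    ∃ φ : UniversalEnvelopingAlgebra K (FreeLieAlgebra K X) →ₐ[K]
        UniversalEnvelopingAlgebra K (FreeLieAlgebra K X),
      ∀ f : FreeLieAlgebra K X →ₗ⁅K⁆ FreeLieAlgebra K X, φ ≠ UEnv.map f := by
  obtain ⟨x⟩ := ‹Nonempty X›
  let φ := lift K <|
    FreeLieAlgebra.lift K fun _ : X => (1 : UniversalEnvelopingAlgebra K (FreeLieAlgebra K X))
  have hφ : φ (ι K (FreeLieAlgebra.of K x)) = 1 := by
    simp only [φ, lift_ι_apply, FreeLieAlgebra.lift_of_apply]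
  have hεφ : augmentation K _ (φ (ι K (FreeLieAlgebra.of K x))) ≠ 0 := by
    rw [hφ, map_one]
    exact one_ne_zero
  exact ⟨φ, UEnv.ne_map_of_augmentation_ne_zero hεφ⟩

/-- over a field `K` of characteristic zero, for the free Lie algebra
`𝔤 = L(V)` on a nonzero vector space (here: on a nonempty type `X` of generators),
the universal enveloping algebra functor is not full: there is an algebra endomorphism
of `U𝔤` which is not `U(f)` for any Lie algebra endomorphism `f` of `𝔤`. -/
theorem universalEnveloping_not_full (K X : Type*) [Field K] [CharZero K] [Nonempty X] :
    ∃ φ : UniversalEnvelopingAlgebra K (FreeLieAlgebra K X) →ₐ[K]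
        UniversalEnvelopingAlgebra K (FreeLieAlgebra K X),
      ∀ f : FreeLieAlgebra K X →ₗ⁅K⁆ FreeLieAlgebra K X, φ ≠ UEnv.map f :=
  universalEnveloping_not_full_general K X
end

section
/- Let A = K[x,y] be the polynomial ring in two commuting variables over a field K. In the category of unital differential graded associative algebras, a cofibrant replacement of A (placed in degree 0 with zero differential) is given by the free associative algebra K⟨x, y, z⟩ on generators x, y in degree 0 and z in degree 1, with differential determined by dz = xy − yx, dx = dy = 0. In particular, the map K⟨x,y,z⟩ → K[x,y] sending x↦x, y↦y, z↦0 is a quasi-isomorphism: it induces an isomorphism on all homology groups. -/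
/-!
Write `π` for the projection and `s` for its section sending `X₀^a X₁^b` to the ordered word
`x^a y^b`. Define `h` on words by `h(x w) = x h(w)`, `h(y w) = y h(w) - σ(π w)` and
`h(z w) = -z h(w)`, where `σ(x^a y^b) = ∑_{i<a} x^i z x^(a-1-i) y^b` has boundary
`x^a y^(b+1) - y x^a y^b`. Induction on the length of a word gives `dh + hd = 1 - sπ`, so `h`
contracts the complex onto the ordered words `x^a y^b`. As `h` raises the number of `z`s by one
and `π` kills every word containing `z`, a cycle of positive degree is the boundary of its image
under `h`, and so is a degree-zero cycle in the kernel of `π`. The given grading is the one by the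
number of `z`s, since it contains that grading and is internal.
-/

open FreeAlgebra

noncomputable def projPoly (K : Type*) [Field K] :
    FreeAlgebra K (Fin 3) →ₐ[K] MvPolynomial (Fin 2) K :=
  FreeAlgebra.lift K ![MvPolynomial.X 0, MvPolynomial.X 1, 0]

open MvPolynomial

theorem iSupIndep.le_of_le_of_iSup_eq_top {R M ι : Type*} [Ring R] [AddCommGroup M] [Module R M]
    {H Z : ι → Submodule R M} (hH : iSupIndep H) (hZH : ∀ i, Z i ≤ H i)
    (hZ : ⨆ i, Z i = ⊤) (i : ι) : H i ≤ Z i := by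
  intro a ha
  obtain ⟨b, hb, c, hc, rfl⟩ :=
    Submodule.mem_sup.mp (iSup_split_single Z i ▸ hZ ▸ Submodule.mem_top (x := a))
  have hcH : c ∈ ⨆ j, ⨆ (_ : j ≠ i), H j := iSup₂_mono (fun j _ => hZH j) hc
  have hc0 : c = 0 := Submodule.disjoint_def.mp (hH i) c
    (by simpa using sub_mem ha (hZH i hb)) hcH
  simpa [hc0] using hb

noncomputable section

namespace CommutatorResolution

variable (R : Type*) [CommRing R]

def wordBasis : Module.Basis (List (Fin 3)) R (FreeAlgebra R (Fin 3)) :=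
  (basisFreeMonoid R (Fin 3)).reindex FreeMonoid.toList

def toMvPolynomial : FreeAlgebra R (Fin 3) →ₐ[R] MvPolynomial (Fin 2) R :=
  lift R ![X 0, X 1, 0]

def ofMvPolynomial : MvPolynomial (Fin 2) R →ₗ[R] FreeAlgebra R (Fin 3) :=
  (basisMonomials (Fin 2) R).constr R fun m => ι R 0 ^ m 0 * ι R 1 ^ m 1

def commuteChain : MvPolynomial (Fin 2) R →ₗ[R] FreeAlgebra R (Fin 3) :=
  (basisMonomials (Fin 2) R).constr R fun m =>
    ∑ i ∈ Finset.range (m 0), ι R 0 ^ i * ι R 2 * ι R 0 ^ (m 0 - 1 - i) * ι R 1 ^ m 1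

variable {R}

@[simp] lemma wordBasis_nil : wordBasis R [] = 1 := by
  simp [wordBasis, basisFreeMonoid, equivMonoidAlgebraFreeMonoid]

@[simp] lemma wordBasis_cons (i : Fin 3) (w : List (Fin 3)) :
    wordBasis R (i :: w) = ι R i * wordBasis R w := by
  simp [wordBasis, basisFreeMonoid, equivMonoidAlgebraFreeMonoid]

@[simp] lemma toMvPolynomial_ι_zero : toMvPolynomial R (ι R 0) = X 0 := by
  simp [toMvPolynomial]

@[simp] lemma toMvPolynomial_ι_one : toMvPolynomial R (ι R 1) = X 1 := by
  simp [toMvPolynomial]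

@[simp] lemma toMvPolynomial_ι_two : toMvPolynomial R (ι R 2) = 0 := by
  simp [toMvPolynomial]

lemma monomial_one_eq_basisMonomials (m : Fin 2 →₀ ℕ) :
    monomial m (1 : R) = basisMonomials (Fin 2) R m := by
  rw [coe_basisMonomials]

lemma ofMvPolynomial_monomial (m : Fin 2 →₀ ℕ) :
    ofMvPolynomial R (monomial m 1) = ι R 0 ^ m 0 * ι R 1 ^ m 1 := by
  rw [monomial_one_eq_basisMonomials, ofMvPolynomial, Module.Basis.constr_basis]

lemma commuteChain_monomial (m : Fin 2 →₀ ℕ) :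
    commuteChain R (monomial m 1) = ∑ i ∈ Finset.range (m 0),
      ι R 0 ^ i * ι R 2 * ι R 0 ^ (m 0 - 1 - i) * ι R 1 ^ m 1 := by
  rw [monomial_one_eq_basisMonomials, commuteChain, Module.Basis.constr_basis]

lemma ofMvPolynomial_one : ofMvPolynomial R 1 = 1 := by
  simpa using ofMvPolynomial_monomial (R := R) 0

lemma toMvPolynomial_ofMvPolynomial (p : MvPolynomial (Fin 2) R) :
    toMvPolynomial R (ofMvPolynomial R p) = p := by
  have : (toMvPolynomial R).toLinearMap ∘ₗ ofMvPolynomial R = LinearMap.id := by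
    refine (basisMonomials (Fin 2) R).ext fun m => ?_
    rw [← monomial_one_eq_basisMonomials, LinearMap.comp_apply, ofMvPolynomial_monomial,
      AlgHom.toLinearMap_apply, map_mul, map_pow, map_pow, toMvPolynomial_ι_zero,
      toMvPolynomial_ι_one, LinearMap.id_apply, monomial_eq, C_1, one_mul,
      Finsupp.prod_fintype _ _ (by simp), Fin.prod_univ_two]
  exact LinearMap.congr_fun this p

lemma ofMvPolynomial_X_zero_mul (p : MvPolynomial (Fin 2) R) :
    ofMvPolynomial R (X 0 * p) = ι R 0 * ofMvPolynomial R p := by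
  have : ofMvPolynomial R ∘ₗ LinearMap.mulLeft R (X 0) =
      LinearMap.mulLeft R (ι R 0) ∘ₗ ofMvPolynomial R := by
    refine (basisMonomials (Fin 2) R).ext fun m => ?_
    have h0 : (Finsupp.single 0 1 + m : Fin 2 →₀ ℕ) 0 = m 0 + 1 := by simp [add_comm]
    have h1 : (Finsupp.single 0 1 + m : Fin 2 →₀ ℕ) 1 = m 1 := by simp
    simp only [← monomial_one_eq_basisMonomials, LinearMap.comp_apply, LinearMap.mulLeft_apply,
      X, monomial_mul, one_mul, ofMvPolynomial_monomial, h0, h1, pow_succ', mul_assoc]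
  exact LinearMap.congr_fun this p

lemma commuteChain_X_zero_mul (p : MvPolynomial (Fin 2) R) :
    commuteChain R (X 0 * p) = ι R 2 * ofMvPolynomial R p + ι R 0 * commuteChain R p := by
  have : commuteChain R ∘ₗ LinearMap.mulLeft R (X 0) =
      LinearMap.mulLeft R (ι R 2) ∘ₗ ofMvPolynomial R +
        LinearMap.mulLeft R (ι R 0) ∘ₗ commuteChain R := by
    refine (basisMonomials (Fin 2) R).ext fun m => ?_
    have h0 : (Finsupp.single 0 1 + m : Fin 2 →₀ ℕ) 0 = m 0 + 1 := by simp [add_comm]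
    have h1 : (Finsupp.single 0 1 + m : Fin 2 →₀ ℕ) 1 = m 1 := by simp
    simp only [← monomial_one_eq_basisMonomials, LinearMap.comp_apply, LinearMap.mulLeft_apply,
      LinearMap.add_apply, X, monomial_mul, one_mul, commuteChain_monomial,
      ofMvPolynomial_monomial, h0, h1]
    rw [Finset.sum_range_succ', Finset.mul_sum, add_comm]
    simp [pow_succ', mul_assoc, Nat.sub_sub, Nat.add_comm 1]
  exact LinearMap.congr_fun this p

variable (R) in
def homotopyWord : List (Fin 3) → FreeAlgebra R (Fin 3)
  | [] => 0
  | i :: w => ![ι R 0 * homotopyWord w,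
      ι R 1 * homotopyWord w - commuteChain R (toMvPolynomial R (wordBasis R w)),
      -(ι R 2 * homotopyWord w)] i

variable (R) in
def homotopy : FreeAlgebra R (Fin 3) →ₗ[R] FreeAlgebra R (Fin 3) :=
  (wordBasis R).constr R (homotopyWord R)

lemma homotopy_one : homotopy R 1 = 0 := by
  rw [← wordBasis_nil, homotopy, Module.Basis.constr_basis, homotopyWord]

lemma homotopy_ι_zero_mul (a : FreeAlgebra R (Fin 3)) :
    homotopy R (ι R 0 * a) = ι R 0 * homotopy R a := by
  have : homotopy R ∘ₗ LinearMap.mulLeft R (ι R 0) =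
      LinearMap.mulLeft R (ι R 0) ∘ₗ homotopy R :=
    (wordBasis R).ext fun w => by
      simp [← wordBasis_cons, homotopy, homotopyWord]
  exact LinearMap.congr_fun this a

lemma homotopy_ι_one_mul (a : FreeAlgebra R (Fin 3)) :
    homotopy R (ι R 1 * a) = ι R 1 * homotopy R a - commuteChain R (toMvPolynomial R a) := by
  have : homotopy R ∘ₗ LinearMap.mulLeft R (ι R 1) =
      LinearMap.mulLeft R (ι R 1) ∘ₗ homotopy R -
        commuteChain R ∘ₗ (toMvPolynomial R).toLinearMap :=
    (wordBasis R).ext fun w => by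
      simp [← wordBasis_cons, homotopy, homotopyWord]
  exact LinearMap.congr_fun this a

lemma homotopy_ι_two_mul (a : FreeAlgebra R (Fin 3)) :
    homotopy R (ι R 2 * a) = -(ι R 2 * homotopy R a) := by
  have : homotopy R ∘ₗ LinearMap.mulLeft R (ι R 2) =
      -(LinearMap.mulLeft R (ι R 2) ∘ₗ homotopy R) :=
    (wordBasis R).ext fun w => by
      simp [← wordBasis_cons, homotopy, homotopyWord]
  exact LinearMap.congr_fun this a

/-- The graded Leibniz rule for `dx = dy = 0`, `dz = xy - yx` with a generator on the left;
these rules determine `d` on every word. -/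
structure IsCommutatorDifferential (d : FreeAlgebra R (Fin 3) →ₗ[R] FreeAlgebra R (Fin 3)) :
    Prop where
  map_one : d 1 = 0
  map_ι_zero_mul : ∀ a, d (ι R 0 * a) = ι R 0 * d a
  map_ι_one_mul : ∀ a, d (ι R 1 * a) = ι R 1 * d a
  map_ι_two_mul : ∀ a, d (ι R 2 * a) = (ι R 0 * ι R 1 - ι R 1 * ι R 0) * a - ι R 2 * d a

namespace IsCommutatorDifferential

variable {d : FreeAlgebra R (Fin 3) →ₗ[R] FreeAlgebra R (Fin 3)}
  (hd : IsCommutatorDifferential d)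
include hd

lemma map_ι_zero_pow_mul (n : ℕ) (a : FreeAlgebra R (Fin 3)) :
    d (ι R 0 ^ n * a) = ι R 0 ^ n * d a := by
  induction n with
  | zero => simp
  | succ n ih => rw [pow_succ', mul_assoc, mul_assoc, hd.map_ι_zero_mul, ih]

lemma map_ι_one_pow (n : ℕ) : d (ι R 1 ^ n) = 0 := by
  induction n with
  | zero => simpa using hd.map_one
  | succ n ih => rw [pow_succ', hd.map_ι_one_mul, ih, mul_zero]

lemma map_commuteChain (p : MvPolynomial (Fin 2) R) :
    d (commuteChain R p) = ofMvPolynomial R (X 1 * p) - ι R 1 * ofMvPolynomial R p := by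
  have : d ∘ₗ commuteChain R =
      ofMvPolynomial R ∘ₗ LinearMap.mulLeft R (X 1) -
        LinearMap.mulLeft R (ι R 1) ∘ₗ ofMvPolynomial R := by
    refine (basisMonomials (Fin 2) R).ext fun m => ?_
    have h0 : (Finsupp.single 1 1 + m : Fin 2 →₀ ℕ) 0 = m 0 := by simp
    have h1 : (Finsupp.single 1 1 + m : Fin 2 →₀ ℕ) 1 = m 1 + 1 := by simp [add_comm]
    simp only [← monomial_one_eq_basisMonomials, LinearMap.comp_apply, LinearMap.sub_apply,
      LinearMap.mulLeft_apply, X, monomial_mul, one_mul, commuteChain_monomial,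
      ofMvPolynomial_monomial, h0, h1, map_sum]
    set a := m 0
    set b := m 1
    -- `d (x^i z x^j y^b) = x^(i+1) y x^j y^b - x^i y x^(j+1) y^b`, so the sum telescopes
    let f : ℕ → FreeAlgebra R (Fin 3) := fun i =>
      ι R 0 ^ i * ι R 1 * ι R 0 ^ (a - i) * ι R 1 ^ b
    have step : ∀ i < a,
        d (ι R 0 ^ i * ι R 2 * ι R 0 ^ (a - 1 - i) * ι R 1 ^ b) = f (i + 1) - f i := by
      intro i hi
      obtain ⟨j, hj⟩ := Nat.exists_eq_add_of_lt hi
      simp only [f, hj, show i + j + 1 - 1 - i = j by omega,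
        show i + j + 1 - (i + 1) = j by omega, show i + j + 1 - i = j + 1 by omega]
      rw [pow_succ (ι R 0) i, pow_succ' (ι R 0) j]
      simp only [mul_assoc, hd.map_ι_zero_pow_mul, hd.map_ι_two_mul, hd.map_ι_one_pow, mul_zero,
        sub_zero]
      noncomm_ring
    rw [Finset.sum_congr rfl fun i hi => step i (Finset.mem_range.mp hi), Finset.sum_range_sub]
    simp [f, pow_succ', mul_assoc]
  exact LinearMap.congr_fun this p

lemma toMvPolynomial_map (a : FreeAlgebra R (Fin 3)) : toMvPolynomial R (d a) = 0 := by
  have : (toMvPolynomial R).toLinearMap ∘ₗ d = 0 := by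
    refine (wordBasis R).ext fun w => ?_
    induction w with
    | nil => simp [hd.map_one]
    | cons i w ih =>
      simp only [LinearMap.comp_apply, AlgHom.toLinearMap_apply, LinearMap.zero_apply] at ih ⊢
      match i with
      | 0 => simp [hd.map_ι_zero_mul, ih]
      | 1 => simp [hd.map_ι_one_mul, ih]
      | 2 => simp [hd.map_ι_two_mul, ih, mul_comm]
  exact LinearMap.congr_fun this a

theorem map_homotopy_add_homotopy_map (a : FreeAlgebra R (Fin 3)) :
    d (homotopy R a) + homotopy R (d a) = a - ofMvPolynomial R (toMvPolynomial R a) := by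
  have : d ∘ₗ homotopy R + homotopy R ∘ₗ d =
      LinearMap.id - ofMvPolynomial R ∘ₗ (toMvPolynomial R).toLinearMap := by
    refine (wordBasis R).ext fun w => ?_
    simp only [LinearMap.add_apply, LinearMap.sub_apply, LinearMap.comp_apply,
      LinearMap.id_apply, AlgHom.toLinearMap_apply]
    induction w with
    | nil =>
      simp [homotopy_one, hd.map_one, ofMvPolynomial_one]
    | cons i w ih =>
      rw [wordBasis_cons]
      match i with
      | 0 =>
        simp only [hd.map_ι_zero_mul, homotopy_ι_zero_mul, map_mul, toMvPolynomial_ι_zero,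
          ofMvPolynomial_X_zero_mul]
        linear_combination (norm := noncomm_ring) ι R 0 * ih
      | 1 =>
        simp only [hd.map_ι_one_mul, homotopy_ι_one_mul, map_sub, hd.map_commuteChain,
          hd.toMvPolynomial_map, map_zero, map_mul, toMvPolynomial_ι_one]
        linear_combination (norm := noncomm_ring) ι R 1 * ih
      | 2 =>
        simp only [hd.map_ι_two_mul, homotopy_ι_two_mul, map_sub, map_neg, sub_mul, mul_assoc,
          homotopy_ι_zero_mul, homotopy_ι_one_mul, map_mul, toMvPolynomial_ι_zero,
          commuteChain_X_zero_mul, toMvPolynomial_ι_two, zero_mul, map_zero, sub_zero]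
        linear_combination (norm := noncomm_ring) ι R 2 * ih
  exact LinearMap.congr_fun this a

lemma map_homotopy_of_map_eq_zero {a : FreeAlgebra R (Fin 3)} (ha : d a = 0) :
    d (homotopy R a) = a - ofMvPolynomial R (toMvPolynomial R a) := by
  simpa [ha] using hd.map_homotopy_add_homotopy_map a

end IsCommutatorDifferential

variable (R) in
def zDegree (k : ℕ) : Submodule R (FreeAlgebra R (Fin 3)) :=
  Submodule.span R (wordBasis R '' {w | w.count 2 = k})

lemma wordBasis_mem_zDegree (w : List (Fin 3)) : wordBasis R w ∈ zDegree R (w.count 2) :=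
  Submodule.subset_span ⟨w, rfl, rfl⟩

lemma map_mem_of_mem_zDegree {M : Type*} [AddCommGroup M] [Module R M]
    {f : FreeAlgebra R (Fin 3) →ₗ[R] M} {N : Submodule R M} {k : ℕ}
    (hf : ∀ w : List (Fin 3), w.count 2 = k → f (wordBasis R w) ∈ N)
    {a : FreeAlgebra R (Fin 3)} (ha : a ∈ zDegree R k) : f a ∈ N :=
  (Submodule.map_span_le f _ N).mpr (by rintro _ ⟨w, hw, rfl⟩; exact hf w hw)
    (Submodule.mem_map_of_mem ha)

lemma iSup_zDegree : ⨆ k, zDegree R k = ⊤ := by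
  rw [eq_top_iff, ← (wordBasis R).span_eq, Submodule.span_le]
  rintro _ ⟨w, rfl⟩
  exact Submodule.mem_iSup_of_mem _ (wordBasis_mem_zDegree w)

lemma ι_mul_mem_zDegree {i : Fin 3} (hi : i ≠ 2) {k : ℕ} {a : FreeAlgebra R (Fin 3)}
    (ha : a ∈ zDegree R k) : ι R i * a ∈ zDegree R k :=
  map_mem_of_mem_zDegree (f := LinearMap.mulLeft R (ι R i)) (fun w hw => by
    simpa [← wordBasis_cons, List.count_cons, hi, hw] using wordBasis_mem_zDegree (i :: w)) ha

lemma ι_two_mul_mem_zDegree {k : ℕ} {a : FreeAlgebra R (Fin 3)} (ha : a ∈ zDegree R k) :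
    ι R 2 * a ∈ zDegree R (k + 1) :=
  map_mem_of_mem_zDegree (f := LinearMap.mulLeft R (ι R 2)) (fun w hw => by
    simpa [← wordBasis_cons, List.count_cons, hw] using wordBasis_mem_zDegree (2 :: w)) ha

lemma ι_zero_pow_mul_mem_zDegree (n : ℕ) {k : ℕ} {a : FreeAlgebra R (Fin 3)}
    (ha : a ∈ zDegree R k) : ι R 0 ^ n * a ∈ zDegree R k := by
  induction n with
  | zero => simpa
  | succ n ih => rw [pow_succ', mul_assoc]; exact ι_mul_mem_zDegree (by decide) ih

lemma ι_one_pow_mem_zDegree (n : ℕ) : ι R 1 ^ n ∈ zDegree R 0 := by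
  induction n with
  | zero => simpa using wordBasis_mem_zDegree (R := R) []
  | succ n ih => rw [pow_succ']; exact ι_mul_mem_zDegree (by decide) ih

lemma ofMvPolynomial_mem_zDegree_zero (p : MvPolynomial (Fin 2) R) :
    ofMvPolynomial R p ∈ zDegree R 0 := by
  suffices LinearMap.range (ofMvPolynomial R) ≤ zDegree R 0 from this ⟨p, rfl⟩
  rw [ofMvPolynomial, Module.Basis.constr_range, Submodule.span_le]
  rintro _ ⟨m, rfl⟩
  exact ι_zero_pow_mul_mem_zDegree _ (ι_one_pow_mem_zDegree _)

lemma commuteChain_mem_zDegree_one (p : MvPolynomial (Fin 2) R) :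
    commuteChain R p ∈ zDegree R 1 := by
  suffices LinearMap.range (commuteChain R) ≤ zDegree R 1 from this ⟨p, rfl⟩
  rw [commuteChain, Module.Basis.constr_range, Submodule.span_le]
  rintro _ ⟨m, rfl⟩
  refine Submodule.sum_mem _ fun i _ => ?_
  simp only [mul_assoc]
  exact ι_zero_pow_mul_mem_zDegree _
    (ι_two_mul_mem_zDegree (ι_zero_pow_mul_mem_zDegree _ (ι_one_pow_mem_zDegree _)))

lemma toMvPolynomial_wordBasis_of_count_ne_zero {w : List (Fin 3)} (hw : w.count 2 ≠ 0) :
    toMvPolynomial R (wordBasis R w) = 0 := by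
  induction w with
  | nil => simp at hw
  | cons i w ih =>
    match i with
    | 0 => simp_all
    | 1 => simp_all
    | 2 => simp

lemma toMvPolynomial_eq_zero_of_mem_zDegree_succ {k : ℕ} {a : FreeAlgebra R (Fin 3)}
    (ha : a ∈ zDegree R (k + 1)) : toMvPolynomial R a = 0 := by
  simpa using map_mem_of_mem_zDegree (f := (toMvPolynomial R).toLinearMap) (N := ⊥)
    (fun w hw => by simpa using toMvPolynomial_wordBasis_of_count_ne_zero (by omega)) ha

lemma homotopy_wordBasis_mem_zDegree (w : List (Fin 3)) :
    homotopy R (wordBasis R w) ∈ zDegree R (w.count 2 + 1) := by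
  induction w with
  | nil => simp [homotopy_one]
  | cons i w ih =>
    rw [wordBasis_cons]
    match i with
    | 0 => simpa [homotopy_ι_zero_mul, List.count_cons] using ι_mul_mem_zDegree (by decide) ih
    | 1 =>
      rw [homotopy_ι_one_mul, List.count_cons_of_ne (by decide)]
      refine sub_mem (ι_mul_mem_zDegree (by decide) ih) ?_
      by_cases hw : w.count 2 = 0
      · simpa [hw] using commuteChain_mem_zDegree_one _
      · simp [toMvPolynomial_wordBasis_of_count_ne_zero hw]
    | 2 => simpa [homotopy_ι_two_mul, List.count_cons] using ι_two_mul_mem_zDegree ih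

lemma homotopy_mem_zDegree {k : ℕ} {a : FreeAlgebra R (Fin 3)} (ha : a ∈ zDegree R k) :
    homotopy R a ∈ zDegree R (k + 1) :=
  map_mem_of_mem_zDegree (fun w hw => hw ▸ homotopy_wordBasis_mem_zDegree w) ha

lemma zDegree_le {H : ℕ → Submodule R (FreeAlgebra R (Fin 3))} [SetLike.GradedMonoid H]
    (hx : ι R 0 ∈ H 0) (hy : ι R 1 ∈ H 0) (hz : ι R 2 ∈ H 1) (k : ℕ) :
    zDegree R k ≤ H k := by
  suffices ∀ w : List (Fin 3), wordBasis R w ∈ H (w.count 2) from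
    Submodule.span_le.mpr (by rintro _ ⟨w, rfl, rfl⟩; exact this w)
  intro w
  induction w with
  | nil => simpa using SetLike.GradedOne.one_mem
  | cons i w ih =>
    match i with
    | 0 => simpa using SetLike.mul_mem_graded hx ih
    | 1 => simpa using SetLike.mul_mem_graded hy ih
    | 2 => simpa [add_comm] using SetLike.mul_mem_graded hz ih

lemma eq_zDegree_of_isInternal {H : ℕ → Submodule R (FreeAlgebra R (Fin 3))}
    [SetLike.GradedMonoid H] (hH : DirectSum.IsInternal H)
    (hx : ι R 0 ∈ H 0) (hy : ι R 1 ∈ H 0) (hz : ι R 2 ∈ H 1) (k : ℕ) :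
    H k = zDegree R k :=
  le_antisymm
    (hH.submodule_iSupIndep.le_of_le_of_iSup_eq_top (zDegree_le hx hy hz) iSup_zDegree k)
    (zDegree_le hx hy hz k)

lemma isCommutatorDifferential_of_leibniz {H : ℕ → Submodule R (FreeAlgebra R (Fin 3))}
    (h1 : 1 ∈ H 0) (hx : ι R 0 ∈ H 0) (hy : ι R 1 ∈ H 0) (hz : ι R 2 ∈ H 1)
    {d : FreeAlgebra R (Fin 3) →ₗ[R] FreeAlgebra R (Fin 3)}
    (hdx : d (ι R 0) = 0) (hdy : d (ι R 1) = 0)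
    (hdz : d (ι R 2) = ι R 0 * ι R 1 - ι R 1 * ι R 0)
    (hder : ∀ m : ℕ, ∀ a ∈ H m, ∀ b, d (a * b) = d a * b + ((-1 : R) ^ m) • (a * d b)) :
    IsCommutatorDifferential d where
  map_one := by simpa using hder 0 1 h1 1
  map_ι_zero_mul a := by simpa [hdx] using hder 0 _ hx a
  map_ι_one_mul a := by simpa [hdy] using hder 0 _ hy a
  map_ι_two_mul a := by rw [hder 1 _ hz a, hdz]; simp [sub_eq_add_neg]

end CommutatorResolution

end

open CommutatorResolution in
theorem freeAlgebra_resolution_of_polynomials_general (K : Type*) [Field K]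
    (H : ℕ → Submodule K (FreeAlgebra K (Fin 3)))
    (hinternal : DirectSum.IsInternal H)
    (h1 : (1 : FreeAlgebra K (Fin 3)) ∈ H 0)
    (hx : ι K (0 : Fin 3) ∈ H 0) (hy : ι K (1 : Fin 3) ∈ H 0) (hz : ι K (2 : Fin 3) ∈ H 1)
    (hmul : ∀ m n : ℕ, ∀ a ∈ H m, ∀ b ∈ H n, a * b ∈ H (m + n))
    (d : FreeAlgebra K (Fin 3) →ₗ[K] FreeAlgebra K (Fin 3))
    (hdx : d (ι K (0 : Fin 3)) = 0) (hdy : d (ι K (1 : Fin 3)) = 0)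
    (hdz : d (ι K (2 : Fin 3)) = ι K (0 : Fin 3) * ι K (1 : Fin 3)
        - ι K (1 : Fin 3) * ι K (0 : Fin 3))
    (hdeg0 : ∀ a ∈ H 0, d a = 0)
    (hder : ∀ m : ℕ, ∀ a ∈ H m, ∀ b, d (a * b) = d a * b + ((-1 : K) ^ m) • (a * d b)) :
    -- π is surjective onto `K[x,y]` already on degree-zero elements
    (∀ p : MvPolynomial (Fin 2) K, ∃ a ∈ H 0, projPoly K a = p) ∧
    -- H₀ of the complex is `K[x,y]`: the kernel of `π` on `H 0` is exactly `d (H 1)`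
    (∀ a ∈ H 0, (projPoly K a = 0 ↔ ∃ b ∈ H 1, d b = a)) ∧
    -- the homology vanishes in positive degrees
    (∀ n : ℕ, ∀ a ∈ H (n + 1), d a = 0 → ∃ b ∈ H (n + 2), d b = a) := by
  have : SetLike.GradedMonoid H :=
    { one_mem := h1, mul_mem := fun _ _ _ _ ha hb => hmul _ _ _ ha _ hb }
  have hH : ∀ k, H k = zDegree K k := eq_zDegree_of_isInternal hinternal hx hy hz
  have hd : IsCommutatorDifferential d :=
    isCommutatorDifferential_of_leibniz h1 hx hy hz hdx hdy hdz hder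
  have hπ : projPoly K = toMvPolynomial K := rfl
  rw [hπ]
  simp only [hH] at hdeg0 ⊢
  refine ⟨fun p => ⟨_, ofMvPolynomial_mem_zDegree_zero p, toMvPolynomial_ofMvPolynomial p⟩,
    fun a ha => ⟨fun hπa => ⟨_, homotopy_mem_zDegree ha, ?_⟩, ?_⟩,
    fun n a ha hda => ⟨_, homotopy_mem_zDegree ha, ?_⟩⟩
  · simp [hd.map_homotopy_of_map_eq_zero (hdeg0 a ha), hπa]
  · rintro ⟨b, -, rfl⟩
    exact hd.toMvPolynomial_map b
  · simp [hd.map_homotopy_of_map_eq_zero hda, toMvPolynomial_eq_zero_of_mem_zDegree_succ ha]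

/-- let `A = K⟨x,y,z⟩` be the free unital associative algebra on `x, y`
(degree 0) and `z` (degree 1), graded by the number of occurrences of `z` (formalized as
any multiplicative internal ℕ-grading `H` with `x, y` of degree 0 and `z` of degree 1),
equipped with the degree `−1` graded derivation `d` with `dx = dy = 0`, `dz = xy − yx`.
Then the evident surjection `π : K⟨x,y,z⟩ → K[x,y]` (with `z ↦ 0`) is a quasi-isomorphism:
`π` identifies `H 0 / d(H 1)` with `K[x,y]`, and the homology vanishes in degrees `n ≥ 1`.
In particular `K⟨x,y,z⟩` is a cofibrant replacement of `K[x,y]` in unital dg algebras. -/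
theorem freeAlgebra_resolution_of_polynomials (K : Type*) [Field K] [CharZero K]
    (H : ℕ → Submodule K (FreeAlgebra K (Fin 3)))
    (hinternal : DirectSum.IsInternal H)
    (h1 : (1 : FreeAlgebra K (Fin 3)) ∈ H 0)
    (hx : ι K (0 : Fin 3) ∈ H 0) (hy : ι K (1 : Fin 3) ∈ H 0) (hz : ι K (2 : Fin 3) ∈ H 1)
    (hmul : ∀ m n : ℕ, ∀ a ∈ H m, ∀ b ∈ H n, a * b ∈ H (m + n))
    (d : FreeAlgebra K (Fin 3) →ₗ[K] FreeAlgebra K (Fin 3))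
    (hdx : d (ι K (0 : Fin 3)) = 0) (hdy : d (ι K (1 : Fin 3)) = 0)
    (hdz : d (ι K (2 : Fin 3)) = ι K (0 : Fin 3) * ι K (1 : Fin 3)
        - ι K (1 : Fin 3) * ι K (0 : Fin 3))
    (hdeg : ∀ n : ℕ, ∀ a ∈ H (n + 1), d a ∈ H n)
    (hdeg0 : ∀ a ∈ H 0, d a = 0)
    (hd2 : ∀ a, d (d a) = 0)
    (hder : ∀ m : ℕ, ∀ a ∈ H m, ∀ b, d (a * b) = d a * b + ((-1 : K) ^ m) • (a * d b)) :
    -- π is surjective onto `K[x,y]` already on degree-zero elements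
    (∀ p : MvPolynomial (Fin 2) K, ∃ a ∈ H 0, projPoly K a = p) ∧
    -- H₀ of the complex is `K[x,y]`: the kernel of `π` on `H 0` is exactly `d (H 1)`
    (∀ a ∈ H 0, (projPoly K a = 0 ↔ ∃ b ∈ H 1, d b = a)) ∧
    -- the homology vanishes in positive degrees
    (∀ n : ℕ, ∀ a ∈ H (n + 1), d a = 0 → ∃ b ∈ H (n + 2), d b = a) :=
  freeAlgebra_resolution_of_polynomials_general K H hinternal h1 hx hy hz hmul d hdx hdy hdz hdeg0
    hder
end

section
/- Let K be a field of characteristic zero, 𝔤 a Lie algebra over K. The symmetrization map σ: Sym(𝔤) → U𝔤 is equivariant for the adjoint actions: σ(x · p) = ι(x)σ(p) − σ(p)ι(x) for x ∈ 𝔤 and p ∈ Sym(𝔤), where x acts on Sym(𝔤) as the derivation extending ad(x) on 𝔤. -/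
/-!
Both actions are derivations: `D x` on the commutative algebra `S`, and `a ↦ ι x * a - a * ι x`
on `U𝔤`. A derivation applied to a product of `n` factors is the sum of the `n` products in
which one factor is replaced by its derivative, and on the factors `ι y` the commutator with
`ι x` is `ι ⁅x, y⁆`. Hence applying either action to a monomial `y₁ ⋯ yₙ` (resp. to each
ordered product in its symmetrization) replaces one `yⱼ` by `⁅x, yⱼ⁆`, and after reindexing
the positions by the permutation, both sides are the same sum of symmetrized monomials. By
linearity and since monomials span `S`, this suffices.
-/

open Function

section Leibniz

variable {R : Type*} [Ring R]

theorem map_list_prod_ofFn_of_leibniz (δ : R → R) (hδ : ∀ a b, δ (a * b) = δ a * b + a * δ b) :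
    ∀ {n : ℕ} (u : Fin n → R),
      δ (List.ofFn u).prod = ∑ k, (List.ofFn (update u k (δ (u k)))).prod
  | 0, _ => by simpa using hδ 1 1
  | n + 1, u => by
    obtain ⟨a, t, rfl⟩ : ∃ a t, u = Fin.cons a t := ⟨u 0, Fin.tail u, (Fin.cons_self_tail u).symm⟩
    simp only [List.ofFn_cons, List.prod_cons, hδ, Fin.sum_univ_succ, Fin.cons_zero,
      Fin.cons_succ, Fin.update_cons_zero, ← Fin.cons_update,
      map_list_prod_ofFn_of_leibniz δ hδ t, Finset.mul_sum]

theorem map_sum_perm_list_prod_ofFn_of_leibniz (δ : R →+ R)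
    (hδ : ∀ a b, δ (a * b) = δ a * b + a * δ b) {n : ℕ} (w : Fin n → R) :
    δ (∑ τ : Equiv.Perm (Fin n), (List.ofFn (w ∘ τ)).prod) =
      ∑ j, ∑ τ : Equiv.Perm (Fin n), (List.ofFn (update w j (δ (w j)) ∘ τ)).prod := by
  rw [map_sum, Finset.sum_comm]
  refine Finset.sum_congr rfl fun τ _ => ?_
  rw [map_list_prod_ofFn_of_leibniz δ hδ]
  refine Fintype.sum_equiv τ _ _ fun k => ?_
  rw [update_comp_equiv, Equiv.symm_apply_apply]
  rfl

theorem leibniz_mulLeft_sub_mulRight (x a b : R) :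
    (AddMonoidHom.mulLeft x - AddMonoidHom.mulRight x) (a * b) =
      (AddMonoidHom.mulLeft x - AddMonoidHom.mulRight x) a * b +
        a * (AddMonoidHom.mulLeft x - AddMonoidHom.mulRight x) b := by
  simp only [AddMonoidHom.sub_apply, AddMonoidHom.coe_mulLeft, AddMonoidHom.coe_mulRight]
  noncomm_ring

end Leibniz

theorem Derivation.map_prod_univ {K S : Type*} [CommSemiring K] [CommRing S] [Algebra K S]
    (D : Derivation K S S) {n : ℕ} (g : Fin n → S) :
    D (∏ i, g i) = ∑ j, ∏ i, update g j (D (g j)) i := by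
  simp only [← List.prod_ofFn]
  refine map_list_prod_ofFn_of_leibniz D (fun a b => ?_) g
  rw [D.leibniz, smul_eq_mul, smul_eq_mul, add_comm, mul_comm b]

theorem UniversalEnvelopingAlgebra.ι_mul_sub_mul_ι {R L : Type*} [CommRing R] [LieRing L]
    [LieAlgebra R L] (x y : L) :
    ι R x * ι R y - ι R y * ι R x = ι R ⁅x, y⁆ := by
  let := LieRing.ofAssociativeRing (A := UniversalEnvelopingAlgebra R L)
  rw [LieHom.map_lie, Ring.lie_def]

theorem pbw_symmetrization_equivariant_general (K 𝔤 S : Type*) [Field K]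
    [LieRing 𝔤] [LieAlgebra K 𝔤] [CommRing S] [Algebra K S] (ιS : 𝔤 →ₗ[K] S)
    -- `S` is the symmetric algebra: it is spanned by the monomials in `ιS`
    (hspan : Submodule.span K {s : S | ∃ (n : ℕ) (v : Fin n → 𝔤), s = ∏ i, ιS (v i)} = ⊤)
    -- the symmetrization map
    (σ : S →ₗ[K] UniversalEnvelopingAlgebra K 𝔤)
    (hσ : ∀ (n : ℕ) (v : Fin n → 𝔤),
      σ (∏ i, ιS (v i)) = (n.factorial : K)⁻¹ •
        ∑ τ : Equiv.Perm (Fin n),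
          (List.ofFn fun i => (UniversalEnvelopingAlgebra.ι K (v (τ i)) :
            UniversalEnvelopingAlgebra K 𝔤)).prod)
    -- the action of `𝔤` on `S` by derivations extending the adjoint action
    (D : 𝔤 → Derivation K S S)
    (hD : ∀ x y : 𝔤, D x (ιS y) = ιS ⁅x, y⁆) :
    ∀ (x : 𝔤) (p : S),
      σ (D x p) = UniversalEnvelopingAlgebra.ι K x * σ p
        - σ p * UniversalEnvelopingAlgebra.ι K x := by
  open UniversalEnvelopingAlgebra in
  intro x
  let ad : UniversalEnvelopingAlgebra K 𝔤 →ₗ[K] UniversalEnvelopingAlgebra K 𝔤 :=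
    LinearMap.mulLeft K (ι K x) - LinearMap.mulRight K (ι K x)
  suffices σ ∘ₗ (D x : S →ₗ[K] S) = ad ∘ₗ σ from fun p => LinearMap.congr_fun this p
  refine LinearMap.ext_on hspan ?_
  rintro _ ⟨n, v, rfl⟩
  have hDmonomial : D x (∏ i, ιS (v i)) = ∑ j, ∏ i, ιS (update v j ⁅x, v j⁆ i) := by
    simp only [Derivation.map_prod_univ, hD, apply_update (fun _ => ιS)]
  have hadMonomials := map_sum_perm_list_prod_ofFn_of_leibniz
    (AddMonoidHom.mulLeft (ι K x) - AddMonoidHom.mulRight (ι K x))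
    (leibniz_mulLeft_sub_mulRight _) (ι K ∘ v)
  simp only [AddMonoidHom.sub_apply, AddMonoidHom.coe_mulLeft, AddMonoidHom.coe_mulRight,
    comp_apply, ι_mul_sub_mul_ι, ← comp_update] at hadMonomials
  simp only [LinearMap.comp_apply, Derivation.coeFn_coe, hDmonomial, map_sum, hσ, ad,
    LinearMap.sub_apply, LinearMap.mulLeft_apply, LinearMap.mulRight_apply, mul_smul_comm,
    smul_mul_assoc, ← smul_sub, ← Finset.smul_sum]
  exact congrArg _ hadMonomials.symm

/-- let `K` be a field of characteristic zero and `𝔤` a Lie algebra over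
`K`.  Let `S` (with `ιS : 𝔤 → S`) be the symmetric algebra on `𝔤`, let
`σ : Sym(𝔤) → U𝔤` be the symmetrization map (determined on monomials by the
symmetrization formula), and let `x` act on `Sym(𝔤)` by the unique derivation `D x`
extending `ad x`, and on `U𝔤` by the commutator.  Then `σ` is equivariant:
`σ(x · p) = ι(x)σ(p) − σ(p)ι(x)` for all `x ∈ 𝔤`, `p ∈ Sym(𝔤)`. -/
theorem pbw_symmetrization_equivariant (K 𝔤 S : Type*) [Field K] [CharZero K]
    [LieRing 𝔤] [LieAlgebra K 𝔤] [CommRing S] [Algebra K S] (ιS : 𝔤 →ₗ[K] S)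
    -- `S` is the symmetric algebra: it is spanned by the monomials in `ιS`
    (hspan : Submodule.span K {s : S | ∃ (n : ℕ) (v : Fin n → 𝔤), s = ∏ i, ιS (v i)} = ⊤)
    -- the symmetrization map
    (σ : S →ₗ[K] UniversalEnvelopingAlgebra K 𝔤)
    (hσ : ∀ (n : ℕ) (v : Fin n → 𝔤),
      σ (∏ i, ιS (v i)) = (n.factorial : K)⁻¹ •
        ∑ τ : Equiv.Perm (Fin n),
          (List.ofFn fun i => (UniversalEnvelopingAlgebra.ι K (v (τ i)) :
            UniversalEnvelopingAlgebra K 𝔤)).prod)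
    -- the action of `𝔤` on `S` by derivations extending the adjoint action
    (D : 𝔤 → Derivation K S S)
    (hD : ∀ x y : 𝔤, D x (ιS y) = ιS ⁅x, y⁆) :
    ∀ (x : 𝔤) (p : S),
      σ (D x p) = UniversalEnvelopingAlgebra.ι K x * σ p
        - σ p * UniversalEnvelopingAlgebra.ι K x :=
  pbw_symmetrization_equivariant_general K 𝔤 S ιS hspan σ hσ D hD
end
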